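/- Let f ∈ H and let u_e ∈ V be a weak solution of the steady sabra shell model ν Au_e + B(u_e,u_e) = f. Then u_e ∈ D(A), and |Au_e|² ≤ (4C₁²/ν²)‖u_e‖²|u_e|² + (4/ν²)|f|². -/

import Mathlib

open scoped BigOperators

/-- Wave numbers `kₙ = k₀ λⁿ`. -/
noncomputable def kk (k0 lam : ℝ) (n : ℤ) : ℝ := k0 * lam ^ n

/-- The sabra shell model bilinear operator `B(u,v)ₙ`. -/
noncomputable def sabraB (a b k0 lam : ℝ) (u v : ℤ → ℂ) (n : ℤ) : ℂ :=
  if 1 ≤ n then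
    -Complex.I *
      ((a : ℂ) * (kk k0 lam (n + 1) : ℂ) * v (n + 2) * (starRingEnd ℂ) (u (n + 1))
        + (b : ℂ) * (kk k0 lam n : ℂ) * v (n + 1) * (starRingEnd ℂ) (u (n - 1))
        + (a : ℂ) * (kk k0 lam (n - 1) : ℂ) * u (n - 1) * v (n - 2)
        + (b : ℂ) * (kk k0 lam (n - 1) : ℂ) * v (n - 1) * u (n - 2))
  else 0


/-- `ue` is a weak solution of the steady sabra shell model `ν A u + B(u,u) = f`:
`ue ∈ V`, vanishes for nonpositive indices, and the weak formulation
`ν⟨A ue, v⟩ + ⟨B(ue,ue), v⟩ = ⟨f, v⟩` holds for all `v ∈ V`. -/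
def IsSteadyWeakSol (a b ν k0 lam : ℝ) (f ue : ℤ → ℂ) : Prop :=
  (∀ n : ℤ, n ≤ 0 → ue n = 0) ∧
  (Summable fun n : ℤ => (kk k0 lam n) ^ 2 * ‖ue n‖ ^ 2) ∧
  ∀ v : ℤ → ℂ, (Summable fun n : ℤ => (kk k0 lam n) ^ 2 * ‖v n‖ ^ 2) →
    (ν : ℂ) * ∑' n : ℤ, ((kk k0 lam n : ℝ) : ℂ) ^ 2 * ue n * (starRingEnd ℂ) (v n)
      + ∑' n : ℤ, sabraB a b k0 lam ue ue n * (starRingEnd ℂ) (v n)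
      = ∑' n : ℤ, f n * (starRingEnd ℂ) (v n)

/-!
Testing the weak formulation against the unit vectors gives the equation coordinatewise,
`ν kₙ² uₙ = fₙ - B(u,u)ₙ`. Each of the four terms of `B(u,u)ₙ` is bounded by `sup |u| ≤ |u|` times a
weighted translate of the sequence `(kₘ |uₘ|) ∈ ℓ²`, so Cauchy–Schwarz over the four terms and
translation invariance of the `ℓ²` norm give `|B(u,u)|² ≤ C₁² ‖u‖² |u|²`. Then
`ν² kₙ⁴ |uₙ|² ≤ 2|fₙ|² + 2|B(u,u)ₙ|²`, summed over `n`.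
-/

open Finset

section ShiftBound

variable {ι E : Type*} [Fintype ι] [SeminormedAddCommGroup E]

theorem summable_sq_norm_and_tsum_le_of_norm_le_sum_shift (c : ι → ℝ) (hc : ∀ i, 0 ≤ c i)
    (d : ι → ℤ) {w : ℤ → ℝ} (hw : Summable fun n => w n ^ 2) {g : ℤ → E}
    (hg : ∀ n, ‖g n‖ ≤ ∑ i, c i * w (n + d i)) :
    Summable (fun n => ‖g n‖ ^ 2) ∧
      ∑' n, ‖g n‖ ^ 2 ≤ (∑ i, c i) ^ 2 * ∑' n, w n ^ 2 := by
  have hpoint : ∀ n, ‖g n‖ ^ 2 ≤ (∑ i, c i) * ∑ i, c i * w (n + d i) ^ 2 := fun n =>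
    calc ‖g n‖ ^ 2 ≤ (∑ i, c i * w (n + d i)) ^ 2 := pow_le_pow_left₀ (norm_nonneg _) (hg n) 2
      _ ≤ _ := sum_sq_le_sum_mul_sum_of_sq_le_mul _ (fun i _ => hc i)
          (fun i _ => mul_nonneg (hc i) (sq_nonneg _)) (fun i _ => le_of_eq (by ring))
  have hmajorant : HasSum (fun n => (∑ i, c i) * ∑ i, c i * w (n + d i) ^ 2)
      ((∑ i, c i) ^ 2 * ∑' n, w n ^ 2) := by
    have hshift : ∀ i, HasSum (fun n => c i * w (n + d i) ^ 2) (c i * ∑' n, w n ^ 2) := fun i =>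
      (((Equiv.addRight (d i)).hasSum_iff (f := fun n => w n ^ 2)).mpr hw.hasSum).mul_left (c i)
    have h := (hasSum_sum (s := univ) fun i _ => hshift i).mul_left (∑ i, c i)
    rwa [← sum_mul, ← mul_assoc, ← sq] at h
  have hsum : Summable fun n => ‖g n‖ ^ 2 :=
    .of_nonneg_of_le (fun n => sq_nonneg _) hpoint hmajorant.summable
  exact ⟨hsum, hasSum_le hpoint hsum.hasSum hmajorant⟩

end ShiftBound

section Sabra

variable {a b k0 lam : ℝ}

theorem kk_pos (hk0 : 0 < k0) (hlam : 0 < lam) (n : ℤ) : 0 < kk k0 lam n :=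
  mul_pos hk0 (zpow_pos hlam n)

theorem kk_add_one (hlam : lam ≠ 0) (n : ℤ) : kk k0 lam (n + 1) = lam * kk k0 lam n := by
  rw [kk, kk, zpow_add_one₀ hlam]; ring

theorem norm_sabraB_le (u : ℤ → ℂ) (n : ℤ) :
    ‖sabraB a b k0 lam u u n‖ ≤
      |a| * |kk k0 lam (n + 1)| * ‖u (n + 2)‖ * ‖u (n + 1)‖
        + |b| * |kk k0 lam n| * ‖u (n + 1)‖ * ‖u (n - 1)‖
        + |a| * |kk k0 lam (n - 1)| * ‖u (n - 1)‖ * ‖u (n - 2)‖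
        + |b| * |kk k0 lam (n - 1)| * ‖u (n - 1)‖ * ‖u (n - 2)‖ := by
  unfold sabraB
  split_ifs
  · rw [norm_mul, norm_neg, Complex.norm_I, one_mul]
    refine (norm_add₄_le ..).trans_eq ?_
    simp only [norm_mul, Complex.norm_real, Real.norm_eq_abs, RCLike.norm_conj]
  · rw [norm_zero]; positivity

-- After `k_{n+1} = k_{n+2}/λ`, `k_{n-1} = λ k_{n-2}`, each term of `B(u,u)ₙ` is at most
-- `sup |u|` times `sabraCoeff i * kₘ|uₘ|` with `m = n + sabraShift i`;
-- the coefficients add up to `C₁`.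
noncomputable def sabraCoeff (a b lam : ℝ) : Fin 4 → ℝ := ![|a| / lam, |b| / lam, |a| * lam, |b|]

def sabraShift : Fin 4 → ℤ := ![2, 1, -2, -1]

theorem sabraCoeff_nonneg (hlam : 0 ≤ lam) (i : Fin 4) : 0 ≤ sabraCoeff a b lam i := by
  fin_cases i <;>
    simp only [sabraCoeff, Fin.zero_eta, Fin.mk_one, Fin.reduceFinMk, Matrix.cons_val] <;>
    positivity

theorem sum_sabraCoeff (hlam : lam ≠ 0) :
    ∑ i, sabraCoeff a b lam i = |a| * (lam⁻¹ + lam) + |b| * (lam⁻¹ + 1) := by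
  simp only [Fin.sum_univ_four, sabraCoeff, Matrix.cons_val]
  field_simp
  ring

theorem norm_sabraB_le_sum_shift (hk0 : 0 < k0) (hlam : 0 < lam) {u : ℤ → ℂ} {M : ℝ}
    (hM : ∀ j, ‖u j‖ ≤ M) (n : ℤ) :
    ‖sabraB a b k0 lam u u n‖ ≤
      ∑ i, M * sabraCoeff a b lam i * (kk k0 lam (n + sabraShift i) * ‖u (n + sabraShift i)‖) := by
  have hK : ∀ m, |kk k0 lam m| = kk k0 lam m := fun m => abs_of_pos (kk_pos hk0 hlam m)
  have hshift : ∀ m, kk k0 lam (m + 1) = lam * kk k0 lam m := kk_add_one hlam.ne'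
  calc ‖sabraB a b k0 lam u u n‖
      ≤ |a| * |kk k0 lam (n + 1)| * ‖u (n + 2)‖ * M + |b| * |kk k0 lam n| * ‖u (n + 1)‖ * M
        + |a| * |kk k0 lam (n - 1)| * M * ‖u (n - 2)‖
        + |b| * |kk k0 lam (n - 1)| * ‖u (n - 1)‖ * M := by
        refine (norm_sabraB_le u n).trans ?_
        gcongr <;> exact hM _
    _ = _ := by
        have h2 := hshift (n + 1)
        have h1 := hshift (n - 2)
        rw [show n + 1 + 1 = n + 2 by ring] at h2
        rw [show n - 2 + 1 = n - 1 by ring] at h1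
        simp only [Fin.sum_univ_four, sabraCoeff, sabraShift, Matrix.cons_val, ← sub_eq_add_neg, hK]
        rw [h2, h1, hshift n]
        field_simp

theorem summable_sq_norm_sabraB_and_tsum_le (hk0 : 0 < k0) (hlam : 0 < lam) {u : ℤ → ℂ}
    (hH : Summable fun n => ‖u n‖ ^ 2) (hV : Summable fun n => kk k0 lam n ^ 2 * ‖u n‖ ^ 2) :
    Summable (fun n => ‖sabraB a b k0 lam u u n‖ ^ 2) ∧
      ∑' n, ‖sabraB a b k0 lam u u n‖ ^ 2 ≤
        (|a| * (lam⁻¹ + lam) + |b| * (lam⁻¹ + 1)) ^ 2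
          * (∑' n, kk k0 lam n ^ 2 * ‖u n‖ ^ 2) * ∑' n, ‖u n‖ ^ 2 := by
  have hM : ∀ j, ‖u j‖ ≤ √(∑' n, ‖u n‖ ^ 2) := fun j => by
    simpa using Real.abs_le_sqrt (hH.le_tsum j fun _ _ => sq_nonneg _)
  obtain ⟨hB, hBle⟩ := summable_sq_norm_and_tsum_le_of_norm_le_sum_shift
    (fun i => √(∑' n, ‖u n‖ ^ 2) * sabraCoeff a b lam i)
    (fun i => mul_nonneg (Real.sqrt_nonneg _) (sabraCoeff_nonneg hlam.le i)) sabraShift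
    (w := fun n => kk k0 lam n * ‖u n‖) (by simpa only [mul_pow] using hV)
    (norm_sabraB_le_sum_shift hk0 hlam hM)
  refine ⟨hB, hBle.trans_eq ?_⟩
  rw [← mul_sum, mul_pow, Real.sq_sqrt (tsum_nonneg fun _ => sq_nonneg _),
    sum_sabraCoeff hlam.ne']
  simp only [mul_pow]
  ring

end Sabra

theorem tsum_mul_conj_single {ι : Type*} [DecidableEq ι] (g : ι → ℂ) (m : ι) :
    ∑' n, g n * (starRingEnd ℂ) ((Pi.single m 1 : ι → ℂ) n) = g m := by
  rw [tsum_eq_single m fun n hn => by simp [hn]]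
  simp

namespace IsSteadyWeakSol

variable {a b ν k0 lam : ℝ} {f ue : ℤ → ℂ}

theorem summable_norm_sq (hue : IsSteadyWeakSol a b ν k0 lam f ue) (hk0 : 0 < k0)
    (hlam : 1 ≤ lam) : Summable fun n => ‖ue n‖ ^ 2 := by
  refine .of_nonneg_of_le (fun n => sq_nonneg _) (fun n => ?_) (hue.2.1.mul_left (k0⁻¹ ^ 2))
  rcases le_or_gt n 0 with hn | hn
  · simp [hue.1 n hn]
  · have hk : k0 ≤ kk k0 lam n := le_mul_of_one_le_right hk0.le (one_le_zpow₀ hlam hn.le)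
    have hratio : 1 ≤ k0⁻¹ * kk k0 lam n := by
      rwa [inv_mul_eq_div, one_le_div hk0]
    calc ‖ue n‖ ^ 2 ≤ (k0⁻¹ * kk k0 lam n) ^ 2 * ‖ue n‖ ^ 2 :=
          le_mul_of_one_le_left (sq_nonneg _) (one_le_pow₀ hratio)
      _ = k0⁻¹ ^ 2 * (kk k0 lam n ^ 2 * ‖ue n‖ ^ 2) := by ring

theorem apply_eq (hue : IsSteadyWeakSol a b ν k0 lam f ue) (m : ℤ) :
    (ν : ℂ) * ((kk k0 lam m : ℝ) : ℂ) ^ 2 * ue m + sabraB a b k0 lam ue ue m = f m := by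
  have htest : Summable fun n => kk k0 lam n ^ 2 * ‖(Pi.single m 1 : ℤ → ℂ) n‖ ^ 2 :=
    summable_of_ne_finset_zero (s := {m}) fun n hn => by simp_all
  have h := hue.2.2 _ htest
  simp only [tsum_mul_conj_single] at h
  rw [← h, mul_assoc]

theorem sq_mul_kk_pow_four_le (hue : IsSteadyWeakSol a b ν k0 lam f ue) (hν : 0 < ν) (m : ℤ) :
    ν ^ 2 * (kk k0 lam m ^ 4 * ‖ue m‖ ^ 2)
      ≤ 2 * (‖f m‖ ^ 2 + ‖sabraB a b k0 lam ue ue m‖ ^ 2) := by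
  have hnorm : ν * kk k0 lam m ^ 2 * ‖ue m‖ = ‖f m - sabraB a b k0 lam ue ue m‖ := by
    rw [← hue.apply_eq m, add_sub_cancel_right]
    simp [abs_of_pos hν]
  have htri := norm_sub_le (f m) (sabraB a b k0 lam ue ue m)
  have hlhs : ν ^ 2 * (kk k0 lam m ^ 4 * ‖ue m‖ ^ 2) = (ν * kk k0 lam m ^ 2 * ‖ue m‖) ^ 2 := by
    ring
  rw [hlhs, hnorm]
  nlinarith [norm_nonneg (f m - sabraB a b k0 lam ue ue m),
    sq_nonneg (‖f m‖ - ‖sabraB a b k0 lam ue ue m‖)]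

end IsSteadyWeakSol

/-- if `f ∈ H` and `u_e ∈ V` is a weak solution of the steady sabra shell
model, then `u_e ∈ D(A)` and `|Au_e|² ≤ (4C₁²/ν²)‖u_e‖²|u_e|² + (4/ν²)|f|²`,
where `C₁ = |a|(λ⁻¹+λ) + |b|(λ⁻¹+1)`. -/
theorem steady_regularity (a b ν k0 lam : ℝ) (hν : 0 < ν) (hk0 : 0 < k0) (hlam : 1 < lam)
    (f : ℤ → ℂ) (hf : Summable fun n : ℤ => ‖f n‖ ^ 2)
    (ue : ℤ → ℂ) (hue : IsSteadyWeakSol a b ν k0 lam f ue) :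
    Summable (fun n : ℤ => (kk k0 lam n) ^ 4 * ‖ue n‖ ^ 2) ∧
      (∑' n : ℤ, (kk k0 lam n) ^ 4 * ‖ue n‖ ^ 2) ≤
        (4 * (|a| * (lam⁻¹ + lam) + |b| * (lam⁻¹ + 1)) ^ 2 / ν ^ 2) *
            (∑' n : ℤ, (kk k0 lam n) ^ 2 * ‖ue n‖ ^ 2) * (∑' n : ℤ, ‖ue n‖ ^ 2)
          + (4 / ν ^ 2) * ∑' n : ℤ, ‖f n‖ ^ 2 := by
  have hlam0 : 0 < lam := one_pos.trans hlam
  obtain ⟨hB, hBle⟩ := summable_sq_norm_sabraB_and_tsum_le (a := a) (b := b) hk0 hlam0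
    (hue.summable_norm_sq hk0 hlam.le) hue.2.1
  have hpoint : ∀ n, kk k0 lam n ^ 4 * ‖ue n‖ ^ 2
      ≤ 2 / ν ^ 2 * (‖f n‖ ^ 2 + ‖sabraB a b k0 lam ue ue n‖ ^ 2) := fun n => by
    rw [div_mul_eq_mul_div, le_div_iff₀' (by positivity)]
    exact hue.sq_mul_kk_pow_four_le hν n
  have hmajorant := (hf.add hB).mul_left (2 / ν ^ 2)
  have hsum : Summable fun n => kk k0 lam n ^ 4 * ‖ue n‖ ^ 2 :=
    .of_nonneg_of_le (fun n => by positivity) hpoint hmajorant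
  refine ⟨hsum, ?_⟩
  calc ∑' n, kk k0 lam n ^ 4 * ‖ue n‖ ^ 2
      ≤ ∑' n, 2 / ν ^ 2 * (‖f n‖ ^ 2 + ‖sabraB a b k0 lam ue ue n‖ ^ 2) :=
        hsum.tsum_le_tsum hpoint hmajorant
    _ = 2 / ν ^ 2 * (∑' n, ‖f n‖ ^ 2 + ∑' n, ‖sabraB a b k0 lam ue ue n‖ ^ 2) := by
        rw [tsum_mul_left, hf.tsum_add hB]
    _ ≤ 4 / ν ^ 2 * (∑' n, ‖f n‖ ^ 2 + (|a| * (lam⁻¹ + lam) + |b| * (lam⁻¹ + 1)) ^ 2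
          * (∑' n, kk k0 lam n ^ 2 * ‖ue n‖ ^ 2) * ∑' n, ‖ue n‖ ^ 2) := by
        gcongr
        norm_num
    _ = _ := by ring
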